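/- arXiv:1210.4223 — 4 statements merged into one kernel-verified Lean document; each statement's English description precedes it below -/
import Mathlib

section
/- Let ω, η ∈ ℕ and let A be a collection of finite subsets of ℕ such that |u| ≤ ω for all u ∈ A and |{u ∈ A : i ∈ u}| ≤ η for all i ∈ ℕ. Then the algorithmic dimension of A satisfies d*(A) ≤ η(ω − 1) + 1. -/
/-- Greedy coloring: color `i` with a color not used by any smaller neighbor. -/
noncomputable def greedyCol (d : ℕ) (N : ℕ → Finset ℕ) : ℕ → Fin (d + 1)
  | i =>
    let forb : Finset (Fin (d + 1)) :=
      (((N i).filter (· < i)).attach).image (fun j => greedyCol d N j.1)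
    if h : (Finset.univ \ forb).Nonempty then h.choose else 0
termination_by i => i
decreasing_by
  have hj := j.2
  simp only [Finset.mem_filter] at hj
  exact hj.2

lemma greedyCol_spec (d : ℕ) (N : ℕ → Finset ℕ) (i : ℕ) (hN : (N i).card ≤ d)
    (j : ℕ) (hj : j ∈ N i) (hji : j < i) : greedyCol d N i ≠ greedyCol d N j := by
  rw [greedyCol]
  set forb : Finset (Fin (d + 1)) :=
    (((N i).filter (· < i)).attach).image (fun j => greedyCol d N j.1) with hforb
  have hcard : forb.card ≤ d := by
    calc forb.card ≤ (((N i).filter (· < i)).attach).card := Finset.card_image_le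
      _ = ((N i).filter (· < i)).card := Finset.card_attach
      _ ≤ (N i).card := Finset.card_filter_le _ _
      _ ≤ d := hN
  have h : (Finset.univ \ forb).Nonempty := by
    rw [← Finset.card_pos, Finset.card_sdiff_of_subset (Finset.subset_univ _), Finset.card_univ,
      Fintype.card_fin]
    omega
  rw [dif_pos h]
  have hspec := h.choose_spec
  rw [Finset.mem_sdiff] at hspec
  intro heq
  apply hspec.2
  rw [heq]
  exact Finset.mem_image.mpr ⟨⟨j, by simp [hj, hji]⟩, Finset.mem_attach _ _, rfl⟩

/-- If every set in `A` has size at most `ω` and every coordinate lies in at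
most `η` sets of `A`, then the algorithmic dimension of `A` is at most
`η(ω - 1) + 1`. -/
theorem stmt_4 (ω η : ℕ) (A : Set (Finset ℕ))
    (hω : ∀ u ∈ A, u.card ≤ ω)
    (hfin : ∀ i : ℕ, {u ∈ A | i ∈ u}.Finite)
    (hη : ∀ i : ℕ, {u ∈ A | i ∈ u}.ncard ≤ η) :
    ∃ φ : ℕ → Fin (η * (ω - 1) + 1), ∀ u ∈ A, Set.InjOn φ ↑u := by
  set d := η * (ω - 1) with hd
  set N : ℕ → Finset ℕ := fun i => (hfin i).toFinset.biUnion (fun u => u.erase i) with hNdef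
  have hNcard : ∀ i, (N i).card ≤ d := by
    intro i
    calc (N i).card ≤ ∑ u ∈ (hfin i).toFinset, (u.erase i).card :=
          Finset.card_biUnion_le
      _ ≤ ∑ _u ∈ (hfin i).toFinset, (ω - 1) := by
          apply Finset.sum_le_sum
          intro u hu
          rw [Set.Finite.mem_toFinset] at hu
          have : i ∈ u := hu.2
          rw [Finset.card_erase_of_mem this]
          exact Nat.sub_le_sub_right (hω u hu.1) 1
      _ = (hfin i).toFinset.card * (ω - 1) := by rw [Finset.sum_const, smul_eq_mul]
      _ ≤ η * (ω - 1) := by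
          apply Nat.mul_le_mul_right
          have := hη i
          rwa [Set.ncard_eq_toFinset_card _ (hfin i)] at this
  have hmem : ∀ u ∈ A, ∀ i ∈ u, ∀ j ∈ u, j ≠ i → j ∈ N i := by
    intro u hu i hi j hj hne
    rw [hNdef]
    refine Finset.mem_biUnion.mpr ⟨u, ?_, ?_⟩
    · rw [Set.Finite.mem_toFinset]; exact ⟨hu, hi⟩
    · exact Finset.mem_erase.mpr ⟨hne, hj⟩
  refine ⟨greedyCol d N, ?_⟩
  intro u hu i hi j hj heq
  simp only [Finset.coe_sort_coe, Finset.mem_coe] at hi hj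
  by_contra hne
  rcases lt_or_gt_of_ne hne with h | h
  · exact greedyCol_spec d N j (hNcard j) i (hmem u hu j hj i hi hne) h heq.symm
  · exact greedyCol_spec d N i (hNcard i) j (hmem u hu i hi j hj (Ne.symm hne)) h heq
end

section
/- Let (γ_j)_{j∈ℕ} be nonnegative reals with T := ∑_{j=1}^∞ γ_j^{1/p} < 1 for some p > 0, and suppose Γ_k ≤ C (k!)^p for all k ∈ ℕ and some constant C > 0. For the POD weights γ_u = Γ_{|u|} ∏_{j∈u} γ_j, one has for every d ∈ ℕ: ∑_{u : d ∈ u ⊆ [d]} γ_u^{1/p} ≤ C^{1/p} (1 − T)^{−2} γ_d^{1/p}. -/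
/-!
Write `x_j = γ_j^{1/p}`. The growth condition on `Γ` gives `γ_u^{1/p} ≤ C^{1/p} |u|! ∏_{j∈u} x_j`.
Splitting off `d` from `u = {d} ∪ t` with `t ⊆ [d-1]`, the sum becomes `C^{1/p} x_d` times
`∑_k (k+1) k! e_k(x_1, …, x_{d-1})`, and the multinomial bound `k! e_k ≤ (∑ x_j)^k` dominates this by
`∑_k (k+1) S^k = (1 - S)^{-2}` with `S = ∑_{j<d} x_j ≤ T`.
-/

open Finset
open scoped Nat

namespace Multiset

variable {R : Type*}

theorem esymm_cons_succ [CommSemiring R] (a : R) (s : Multiset R) (k : ℕ) :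
    (a ::ₘ s).esymm (k + 1) = s.esymm (k + 1) + a * s.esymm k := by
  simp [esymm, powersetCard_cons, map_map, sum_map_mul_left]

theorem factorial_mul_esymm_le_sum_pow [CommSemiring R] [LinearOrder R] [IsOrderedRing R]
    [ExistsAddOfLE R] {s : Multiset R} (hs : ∀ a ∈ s, 0 ≤ a) (k : ℕ) :
    (k ! : R) * s.esymm k ≤ s.sum ^ k := by
  induction s using Multiset.induction_on generalizing k with
  | empty => cases k <;> simp [esymm, powersetCard_zero_right]
  | cons a s ih =>
    cases k with
    | zero => simp [esymm]
    | succ k =>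
      have ha : 0 ≤ a := hs a (mem_cons_self a s)
      have hs' : ∀ b ∈ s, 0 ≤ b := fun b hb => hs b (mem_cons_of_mem hb)
      have hsum : 0 ≤ s.sum := sum_nonneg hs'
      calc ((k + 1)! : R) * (a ::ₘ s).esymm (k + 1)
          = ((k + 1)! : R) * s.esymm (k + 1) + (k + 1 : ℕ) * a * ((k ! : R) * s.esymm k) := by
            rw [esymm_cons_succ, Nat.factorial_succ]; push_cast; ring
        _ ≤ s.sum ^ (k + 1) + (k + 1 : ℕ) * a * s.sum ^ k := by
            gcongr
            · exact ih hs' (k + 1)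
            · exact ih hs' k
        _ ≤ (a ::ₘ s).sum ^ (k + 1) := by
            rw [sum_cons, add_comm a]
            simpa [mul_right_comm] using
              pow_add_mul_le_add_pow hsum (add_nonneg (mul_nonneg zero_le_two hsum) ha) (k + 1)

end Multiset

theorem sum_range_succ_mul_pow_le {r : ℝ} (h0 : 0 ≤ r) (h1 : r < 1) (n : ℕ) :
    ∑ k ∈ range n, ((k : ℝ) + 1) * r ^ k ≤ ((1 - r) ^ 2)⁻¹ := by
  have := hasSum_choose_mul_geometric_of_norm_lt_one 1 (by rwa [Real.norm_of_nonneg h0])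
  simp only [Nat.choose_one_right, Nat.cast_add, Nat.cast_one, one_add_one_eq_two, one_div] at this
  exact sum_le_hasSum _ (fun k _ => by positivity) this

theorem Finset.sum_powerset_filter_mem_insert {α β : Type*} [DecidableEq α] [AddCommMonoid β]
    {a : α} {s : Finset α} (ha : a ∉ s) (f : Finset α → β) :
    ∑ u ∈ (insert a s).powerset with a ∈ u, f u = ∑ t ∈ s.powerset, f (insert a t) := by
  rw [sum_filter, sum_powerset_insert ha, sum_eq_zero, zero_add]
  · simp
  · intro t ht
    rw [if_neg fun h => ha (mem_powerset.1 ht h)]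

theorem sum_powerset_factorial_succ_mul_prod_le {α : Type*} (x : α → ℝ) (hx : ∀ j, 0 ≤ x j)
    (s : Finset α) (hs : ∑ j ∈ s, x j < 1) :
    ∑ t ∈ s.powerset, ((#t + 1)! : ℝ) * ∏ j ∈ t, x j ≤ ((1 - ∑ j ∈ s, x j) ^ 2)⁻¹ := by
  have hmap : ∀ b ∈ s.val.map x, 0 ≤ b := by simp [hx]
  rw [sum_powerset]
  calc ∑ k ∈ range (#s + 1), ∑ t ∈ powersetCard k s, ((#t + 1)! : ℝ) * ∏ j ∈ t, x j
      = ∑ k ∈ range (#s + 1), ((k : ℝ) + 1) * ((k ! : ℝ) * (s.val.map x).esymm k) := by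
        refine sum_congr rfl fun k _ => ?_
        rw [Finset.esymm_map_val, mul_sum, mul_sum]
        refine sum_congr rfl fun t ht => ?_
        rw [(mem_powersetCard.1 ht).2, Nat.factorial_succ]
        push_cast
        ring
    _ ≤ ∑ k ∈ range (#s + 1), ((k : ℝ) + 1) * (∑ j ∈ s, x j) ^ k := by
        gcongr with k
        simpa using Multiset.factorial_mul_esymm_le_sum_pow hmap k
    _ ≤ ((1 - ∑ j ∈ s, x j) ^ 2)⁻¹ :=
        sum_range_succ_mul_pow_le (sum_nonneg fun j _ => hx j) hs _

theorem sum_powerset_filter_mem_factorial_mul_prod_le {α : Type*} [DecidableEq α] (x : α → ℝ)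
    (hx : ∀ j, 0 ≤ x j) {a : α} {s : Finset α} (ha : a ∉ s) (hs : ∑ j ∈ s, x j < 1) :
    ∑ u ∈ (insert a s).powerset with a ∈ u, ((#u)! : ℝ) * ∏ j ∈ u, x j ≤
      ((1 - ∑ j ∈ s, x j) ^ 2)⁻¹ * x a := by
  rw [sum_powerset_filter_mem_insert ha]
  calc ∑ t ∈ s.powerset, ((#(insert a t))! : ℝ) * ∏ j ∈ insert a t, x j
      = x a * ∑ t ∈ s.powerset, ((#t + 1)! : ℝ) * ∏ j ∈ t, x j := by
        rw [mul_sum]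
        refine sum_congr rfl fun t ht => ?_
        have hat : a ∉ t := fun h => ha (mem_powerset.1 ht h)
        rw [card_insert_of_notMem hat, prod_insert hat]
        ring
    _ ≤ x a * ((1 - ∑ j ∈ s, x j) ^ 2)⁻¹ :=
        mul_le_mul_of_nonneg_left (sum_powerset_factorial_succ_mul_prod_le x hx s hs) (hx a)
    _ = ((1 - ∑ j ∈ s, x j) ^ 2)⁻¹ * x a := mul_comm _ _

theorem Real.rpow_one_div_le_of_le_mul_rpow {a b C p : ℝ} (ha : 0 ≤ a) (hb : 0 ≤ b)
    (hC : 0 ≤ C) (hp : 0 < p) (h : a ≤ C * b ^ p) : a ^ (1 / p) ≤ C ^ (1 / p) * b := by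
  calc a ^ (1 / p) ≤ (C * b ^ p) ^ (1 / p) := by gcongr
    _ = C ^ (1 / p) * b := by
      rw [Real.mul_rpow hC (by positivity), one_div, Real.rpow_rpow_inv hb hp.ne']

/-- For POD weights `γ_u = Γ_{|u|} ∏_{j∈u} γ_j` with `T = ∑_j γ_j^{1/p} < 1`
and `Γ_k ≤ C (k!)^p`, one has for every `d ≥ 1`:
`∑_{u : d ∈ u ⊆ [d]} γ_u^{1/p} ≤ C^{1/p} (1-T)^{-2} γ_d^{1/p}`. -/
theorem stmt_7 (γ : ℕ → ℝ) (Γ : ℕ → ℝ) (p C : ℝ)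
    (hγ0 : ∀ j, 0 ≤ γ j) (hΓ0 : ∀ k, 0 ≤ Γ k)
    (hp : 0 < p) (hC : 0 < C)
    (hΓ : ∀ k : ℕ, Γ k ≤ C * (k.factorial : ℝ) ^ p)
    (hsum : Summable fun j : ℕ => γ j ^ (1 / p))
    (hT : (∑' j : ℕ, γ j ^ (1 / p)) < 1) :
    ∀ d : ℕ, 1 ≤ d →
      (∑ u ∈ (Finset.Icc 1 d).powerset.filter (fun u => d ∈ u),
          (Γ u.card * ∏ j ∈ u, γ j) ^ (1 / p)) ≤
        C ^ (1 / p) * ((1 - ∑' j : ℕ, γ j ^ (1 / p)) ^ 2)⁻¹ * γ d ^ (1 / p) := by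
  intro d hd
  obtain ⟨n, rfl⟩ : ∃ n, d = n + 1 := ⟨d - 1, by omega⟩
  set x : ℕ → ℝ := fun j => γ j ^ (1 / p)
  have hx : ∀ j, 0 ≤ x j := fun j => Real.rpow_nonneg (hγ0 j) _
  have hST : ∑ j ∈ Icc 1 n, x j ≤ ∑' j, x j := hsum.sum_le_tsum _ fun j _ => hx j
  have hweight (u : Finset ℕ) :
      (Γ #u * ∏ j ∈ u, γ j) ^ (1 / p) ≤ C ^ (1 / p) * ((#u)! * ∏ j ∈ u, x j) := by
    have hprod : 0 ≤ ∏ j ∈ u, γ j := prod_nonneg fun j _ => hγ0 j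
    rw [Real.mul_rpow (hΓ0 _) hprod, Real.finsetProd_rpow u γ fun j _ => hγ0 j, ← mul_assoc]
    gcongr
    exact Real.rpow_one_div_le_of_le_mul_rpow (hΓ0 _) (Nat.cast_nonneg _) hC.le hp (hΓ _)
  rw [← insert_Icc_right_eq_Icc_add_one (by omega)]
  calc ∑ u ∈ (insert (n + 1) (Icc 1 n)).powerset with n + 1 ∈ u, (Γ #u * ∏ j ∈ u, γ j) ^ (1 / p)
      ≤ C ^ (1 / p) * ∑ u ∈ (insert (n + 1) (Icc 1 n)).powerset with n + 1 ∈ u,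
          ((#u)! : ℝ) * ∏ j ∈ u, x j := by
        rw [mul_sum]
        exact sum_le_sum fun u _ => hweight u
    _ ≤ C ^ (1 / p) * (((1 - ∑ j ∈ Icc 1 n, x j) ^ 2)⁻¹ * x (n + 1)) := by
        gcongr
        exact sum_powerset_filter_mem_factorial_mul_prod_le x hx (by simp) (hST.trans_lt hT)
    _ ≤ C ^ (1 / p) * (((1 - ∑' j, x j) ^ 2)⁻¹ * x (n + 1)) := by
        gcongr
        exact hx _
    _ = C ^ (1 / p) * ((1 - ∑' j, x j) ^ 2)⁻¹ * x (n + 1) := by ring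
end

section
/- Let (γ_j) be nonincreasing nonnegative reals and γ_u = Γ_{|u|}∏_{j∈u}γ_j POD weights with decay_{γ,1} = p* and Γ_k ≤ C_q (k!)^q for some q < p*. Then for every τ ∈ [1, p*) and every constant C̃_τ > 0, the quantity ∑_{u : d ∈ u ⊆ [d]} γ_u^{1/τ} C̃_τ^{|u|} is bounded above and below by positive constant multiples of γ_d^{1/τ}, uniformly in d. -/
/-! The lower bound is the single term `u = {d}`. For the upper bound, absorb `C̃_τ` into the
weights `γ̃_j = γ_j C̃_τ^τ` and pick `p` with `max τ q < p < p*`. Since `t ↦ t^(p/τ)` is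
superadditive, it suffices to bound `∑_{d ∈ u} γ̃_u^(1/p)` by a multiple of `γ̃_d^(1/p)`.
Splitting off `j = d`, using `Γ_k^(1/p) ≤ C (k!)^(q/p)` and bounding the elementary symmetric
sums of `x_j = γ̃_j^(1/p)` by `(∑ x_j)^ℓ / ℓ!`, the remaining sum is at most
`C ∑_ℓ ((ℓ+1)!)^(q/p) S^ℓ / ℓ!`, which converges because `q/p < 1`. Here `S = ∑_j γ̃_j^(1/p)`
is finite because `γ_j = O(j^(-s))` for some `s > p`. -/

open Finset Filter
open scoped Nat

theorem Finset.sum_rpow_le_rpow_sum {ι : Type*} (s : Finset ι) {f : ι → ℝ}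
    (hf : ∀ i ∈ s, 0 ≤ f i) {r : ℝ} (hr : 1 ≤ r) :
    ∑ i ∈ s, f i ^ r ≤ (∑ i ∈ s, f i) ^ r := by
  have hsplit : ∀ x : ℝ, 0 ≤ x → x ^ r = x ^ (r - 1) * x := fun x hx => by
    rw [← Real.rpow_add_one' hx (by linarith), sub_add_cancel]
  calc ∑ i ∈ s, f i ^ r = ∑ i ∈ s, f i ^ (r - 1) * f i :=
        sum_congr rfl fun i hi => hsplit _ (hf i hi)
    _ ≤ ∑ i ∈ s, (∑ j ∈ s, f j) ^ (r - 1) * f i := sum_le_sum fun i hi =>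
        mul_le_mul_of_nonneg_right
          (Real.rpow_le_rpow (hf i hi) (single_le_sum hf hi) (by linarith)) (hf i hi)
    _ = (∑ i ∈ s, f i) ^ r := by rw [← mul_sum, ← hsplit _ (sum_nonneg hf)]

theorem Finset.sum_filter_mem_powerset {α β : Type*} [DecidableEq α] [AddCommMonoid β]
    {s : Finset α} {a : α} (ha : a ∈ s) (f : Finset α → β) :
    ∑ u ∈ s.powerset.filter (fun u => a ∈ u), f u =
      ∑ v ∈ (s.erase a).powerset, f (insert a v) := by
  conv_lhs => rw [← insert_erase ha]
  rw [sum_filter, sum_powerset_insert (notMem_erase a s), sum_eq_zero, zero_add]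
  · simp
  · intro t ht
    rw [if_neg fun h => notMem_erase a s (mem_powerset.1 ht h)]

theorem Finset.sum_powersetCard_succ_insert {α β : Type*} [DecidableEq α] [AddCommMonoid β]
    {s : Finset α} {a : α} (ha : a ∉ s) (n : ℕ) (f : Finset α → β) :
    ∑ t ∈ powersetCard (n + 1) (insert a s), f t =
      ∑ t ∈ powersetCard (n + 1) s, f t + ∑ t ∈ powersetCard n s, f (insert a t) := by
  rw [powersetCard_succ_insert ha, sum_union, sum_image]
  · exact insert_erase_invOn.2.injOn.mono fun t ht ↦ notMem_mono (mem_powersetCard.1 ht).1 ha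
  · aesop (add simp [disjoint_left, insert_subset_iff])

theorem Finset.sum_powersetCard_prod_le {ι : Type*} [DecidableEq ι] (s : Finset ι)
    {g : ι → ℝ} (hg : ∀ i ∈ s, 0 ≤ g i) (n : ℕ) :
    ∑ t ∈ powersetCard n s, ∏ i ∈ t, g i ≤ (∑ i ∈ s, g i) ^ n / n ! := by
  induction s using Finset.induction_on generalizing n with
  | empty =>
    cases n with
    | zero => simp
    | succ n => simp [powersetCard_eq_empty.2 (by simp : #(∅ : Finset ι) < n + 1)]
  | insert a s ha ih =>
    cases n with
    | zero => simp
    | succ n =>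
      have hg' : ∀ i ∈ s, 0 ≤ g i := fun i hi => hg i (mem_insert_of_mem hi)
      have hga : 0 ≤ g a := hg a (mem_insert_self a s)
      set T := ∑ i ∈ s, g i
      have hT : 0 ≤ T := sum_nonneg hg'
      have hbern : T ^ (n + 1) + (n + 1) * T ^ n * g a ≤ (T + g a) ^ (n + 1) := by
        simpa using pow_add_mul_le_add_pow hT (by positivity) (n + 1)
      have hins : ∑ t ∈ powersetCard n s, ∏ i ∈ insert a t, g i =
          g a * ∑ t ∈ powersetCard n s, ∏ i ∈ t, g i := by
        rw [mul_sum]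
        exact sum_congr rfl fun t ht => prod_insert fun h => ha ((mem_powersetCard.1 ht).1 h)
      rw [sum_powersetCard_succ_insert ha, hins, sum_insert ha]
      calc _ ≤ T ^ (n + 1) / (n + 1)! + g a * (T ^ n / n !) :=
            add_le_add (ih hg' (n + 1)) (mul_le_mul_of_nonneg_left (ih hg' n) hga)
        _ = (T ^ (n + 1) + (n + 1) * T ^ n * g a) / (n + 1)! := by
            rw [Nat.factorial_succ]; push_cast; field_simp
        _ ≤ (g a + T) ^ (n + 1) / (n + 1)! := by
            rw [add_comm (g a)]; exact div_le_div_of_nonneg_right hbern (by positivity)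

theorem Finset.sum_powerset_mul_prod_le {ι : Type*} [DecidableEq ι] (s : Finset ι)
    {g : ι → ℝ} (hg : ∀ i ∈ s, 0 ≤ g i) {h : ℕ → ℝ} (hh : ∀ n, 0 ≤ h n) :
    ∑ t ∈ s.powerset, h #t * ∏ i ∈ t, g i ≤
      ∑ n ∈ range (#s + 1), h n * ((∑ i ∈ s, g i) ^ n / n !) := by
  rw [sum_powerset]
  gcongr with n
  calc ∑ t ∈ powersetCard n s, h #t * ∏ i ∈ t, g i
      = h n * ∑ t ∈ powersetCard n s, ∏ i ∈ t, g i := by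
        rw [mul_sum]
        exact sum_congr rfl fun t ht => by rw [(mem_powersetCard.1 ht).2]
    _ ≤ h n * ((∑ i ∈ s, g i) ^ n / n !) :=
        mul_le_mul_of_nonneg_left (sum_powersetCard_prod_le s hg n) (hh n)

theorem sum_powerset_mul_prod_le_tsum {ι : Type*} [DecidableEq ι] {g : ι → ℝ}
    (hg : ∀ i, 0 ≤ g i) (hgs : Summable g) {h : ℕ → ℝ} (hh : ∀ n, 0 ≤ h n)
    (hhs : Summable fun n => h n * ((∑' i, g i) ^ n / n !)) (s : Finset ι) :
    ∑ t ∈ s.powerset, h #t * ∏ i ∈ t, g i ≤ ∑' n, h n * ((∑' i, g i) ^ n / n !) := by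
  have hS : 0 ≤ ∑' i, g i := tsum_nonneg hg
  refine (sum_powerset_mul_prod_le s (fun i _ => hg i) hh).trans <|
    (sum_le_sum fun n _ => ?_).trans <|
      hhs.sum_le_tsum _ fun n _ => mul_nonneg (hh n) (by positivity)
  have := sum_nonneg fun i (_ : i ∈ s) => hg i
  gcongr
  · exact hh n
  · exact hgs.sum_le_tsum s fun i _ => hg i

theorem tendsto_natCast_add_two_rpow_div_add_one {α : ℝ} (hα : α < 1) :
    Tendsto (fun n : ℕ => ((n : ℝ) + 2) ^ α / ((n : ℝ) + 1)) atTop (nhds 0) := by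
  have hlim : Tendsto (fun n : ℕ => 2 * ((n : ℝ) + 2) ^ (-(1 - α))) atTop (nhds 0) := by
    have := ((tendsto_rpow_neg_atTop (by linarith : 0 < 1 - α)).comp
      (tendsto_atTop_add_const_right _ 2 tendsto_natCast_atTop_atTop)).const_mul 2
    simpa using this
  refine squeeze_zero (fun n => ?_) (fun n => ?_) hlim
  · exact div_nonneg (Real.rpow_nonneg (by positivity) α) (by positivity)
  have h2 : (0 : ℝ) < n + 2 := by positivity
  rw [neg_sub, Real.rpow_sub_one' h2.le (by linarith), div_le_iff₀ (by positivity)]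
  rw [mul_div_assoc', div_mul_eq_mul_div, le_div_iff₀ h2]
  nlinarith [Real.rpow_nonneg h2.le α]

theorem summable_factorial_succ_rpow_mul_pow_div_factorial {α : ℝ} (hα : α < 1) {x : ℝ}
    (hx : 0 ≤ x) : Summable fun n : ℕ => ((n + 1)! : ℝ) ^ α * (x ^ n / n !) := by
  refine summable_of_ratio_norm_eventually_le (r := 1 / 2) (by norm_num) ?_
  have hlim := (tendsto_natCast_add_two_rpow_div_add_one hα).mul_const x
  rw [zero_mul] at hlim
  filter_upwards [hlim.eventually (eventually_le_nhds (by norm_num : (0 : ℝ) < 1 / 2))]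
    with n hn
  have hfac : ((n + 1 + 1)! : ℝ) = ((n : ℝ) + 2) * (n + 1)! := by
    rw [Nat.factorial_succ (n + 1)]; push_cast; ring
  have hfac' : ((n + 1)! : ℝ) = ((n : ℝ) + 1) * n ! := by
    rw [Nat.factorial_succ n]; push_cast; ring
  have hratio : ((n + 1 + 1)! : ℝ) ^ α * (x ^ (n + 1) / (n + 1)!) =
      ((n : ℝ) + 2) ^ α / ((n : ℝ) + 1) * x * (((n + 1)! : ℝ) ^ α * (x ^ n / n !)) := by
    rw [hfac, Real.mul_rpow (by positivity) (by positivity), hfac', pow_succ]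
    field_simp
  rw [Real.norm_of_nonneg (by positivity), Real.norm_of_nonneg (by positivity), hratio]
  exact mul_le_mul_of_nonneg_right hn (by positivity)

theorem summable_rpow_of_tendsto_mul_rpow {γ : ℕ → ℝ} (hγ : ∀ j, 0 ≤ γ j) {s θ : ℝ}
    (hθ : 0 ≤ θ) (hsθ : 1 < s * θ)
    (h : Tendsto (fun j : ℕ => γ j * (j : ℝ) ^ s) atTop (nhds 0)) :
    Summable fun j => γ j ^ θ := by
  obtain ⟨M, hM⟩ := h.bddAbove_range
  have hM' : ∀ j, γ j * (j : ℝ) ^ s ≤ M := fun j => hM ⟨j, rfl⟩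
  have hM0 : 0 ≤ M := (hγ 1).trans (by simpa using hM' 1)
  rw [← summable_nat_add_iff 1]
  have hsum : Summable fun j : ℕ => M ^ θ * ((j + 1 : ℕ) : ℝ) ^ (-(s * θ)) :=
    ((summable_nat_add_iff 1).2 (Real.summable_nat_rpow.2 (neg_lt_neg hsθ))).mul_left (M ^ θ)
  refine Summable.of_nonneg_of_le (fun j => Real.rpow_nonneg (hγ _) _) (fun j => ?_) hsum
  have hj : (0 : ℝ) < (j + 1 : ℕ) := by positivity
  have hle : γ (j + 1) ≤ M * ((j + 1 : ℕ) : ℝ) ^ (-s) := by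
    rw [Real.rpow_neg hj.le, ← div_eq_mul_inv, le_div_iff₀ (by positivity)]
    exact hM' (j + 1)
  calc γ (j + 1) ^ θ ≤ (M * ((j + 1 : ℕ) : ℝ) ^ (-s)) ^ θ := Real.rpow_le_rpow (hγ _) hle hθ
    _ = M ^ θ * ((j + 1 : ℕ) : ℝ) ^ (-(s * θ)) := by
        rw [Real.mul_rpow hM0 (by positivity), ← Real.rpow_mul hj.le, neg_mul]

theorem sum_rpow_one_div_le_of_sum_rpow_one_div_le {ι : Type*} {s : Finset ι} {x : ι → ℝ}
    {y K τ p : ℝ} (hx : ∀ i ∈ s, 0 ≤ x i) (hy : 0 ≤ y) (hK : 0 ≤ K) (hτ : 0 < τ)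
    (hτp : τ ≤ p)
    (h : ∑ i ∈ s, x i ^ (1 / p) ≤ K * y ^ (1 / p)) :
    ∑ i ∈ s, x i ^ (1 / τ) ≤ K ^ (p / τ) * y ^ (1 / τ) := by
  have hp : 0 < p := hτ.trans_le hτp
  have hpow : ∀ z : ℝ, 0 ≤ z → z ^ (1 / τ) = (z ^ (1 / p)) ^ (p / τ) := fun z hz => by
    rw [← Real.rpow_mul hz]; congr 1; field_simp
  calc ∑ i ∈ s, x i ^ (1 / τ) = ∑ i ∈ s, (x i ^ (1 / p)) ^ (p / τ) :=
        sum_congr rfl fun i hi => hpow _ (hx i hi)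
    _ ≤ (∑ i ∈ s, x i ^ (1 / p)) ^ (p / τ) :=
        sum_rpow_le_rpow_sum s (fun i hi => Real.rpow_nonneg (hx i hi) _)
          ((one_le_div hτ).2 hτp)
    _ ≤ (K * y ^ (1 / p)) ^ (p / τ) :=
        Real.rpow_le_rpow (sum_nonneg fun i hi => Real.rpow_nonneg (hx i hi) _) h (by positivity)
    _ = K ^ (p / τ) * y ^ (1 / τ) := by rw [Real.mul_rpow hK (by positivity), ← hpow y hy]

theorem rpow_mul_pow_card_eq_rpow_prod_mul {ι : Type*} (a : ℝ) (γ : ι → ℝ) (u : Finset ι)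
    {τ c : ℝ} (hτ : τ ≠ 0) (hc : 0 ≤ c) (ha : 0 ≤ a) (hγ : ∀ j ∈ u, 0 ≤ γ j) :
    (a * ∏ j ∈ u, γ j) ^ (1 / τ) * c ^ #u = (a * ∏ j ∈ u, γ j * c ^ τ) ^ (1 / τ) := by
  rw [prod_mul_distrib, prod_const, ← mul_assoc,
    Real.mul_rpow (mul_nonneg ha (prod_nonneg hγ)) (by positivity), Real.rpow_pow_comm hc,
    one_div, Real.rpow_rpow_inv (by positivity) hτ]

theorem exists_sum_powerset_rpow_pod_insert_le {ι : Type*} [DecidableEq ι] {γ : ι → ℝ}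
    {Γ : ℕ → ℝ} {q Cq p : ℝ} (hγ : ∀ j, 0 ≤ γ j) (hΓnn : ∀ k, 0 ≤ Γ k) (hCq : 0 < Cq)
    (hΓ : ∀ k : ℕ, Γ k ≤ Cq * (k ! : ℝ) ^ q) (hp : 0 < p) (hqp : q < p)
    (hγs : Summable fun j => γ j ^ (1 / p)) :
    ∃ K, 0 < K ∧ ∀ (d : ι) (s : Finset ι), d ∉ s →
      ∑ v ∈ s.powerset, (Γ #(insert d v) * ∏ j ∈ insert d v, γ j) ^ (1 / p) ≤
        K * γ d ^ (1 / p) := by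
  set S := ∑' j, γ j ^ (1 / p)
  have hS : 0 ≤ S := tsum_nonneg fun j => Real.rpow_nonneg (hγ j) _
  have hT := summable_factorial_succ_rpow_mul_pow_div_factorial ((div_lt_one hp).2 hqp) hS
  set T := ∑' n : ℕ, ((n + 1)! : ℝ) ^ (q / p) * (S ^ n / n !)
  have hT0 : 0 < T := hT.tsum_pos (fun n => by positivity) 0 (by simp)
  have hΓp : ∀ k : ℕ, Γ k ^ (1 / p) ≤ Cq ^ (1 / p) * (k ! : ℝ) ^ (q / p) := fun k => by
    calc Γ k ^ (1 / p) ≤ (Cq * (k ! : ℝ) ^ q) ^ (1 / p) :=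
          Real.rpow_le_rpow (hΓnn k) (hΓ k) (by positivity)
      _ = Cq ^ (1 / p) * (k ! : ℝ) ^ (q / p) := by
          rw [Real.mul_rpow hCq.le (by positivity), ← Real.rpow_mul (by positivity), mul_one_div]
  refine ⟨Cq ^ (1 / p) * T, by positivity, fun d s hd => ?_⟩
  calc ∑ v ∈ s.powerset, (Γ #(insert d v) * ∏ j ∈ insert d v, γ j) ^ (1 / p)
      = γ d ^ (1 / p) * ∑ v ∈ s.powerset, Γ (#v + 1) ^ (1 / p) * ∏ j ∈ v, γ j ^ (1 / p) := by
        rw [mul_sum]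
        refine sum_congr rfl fun v hv => ?_
        have hdv : d ∉ v := fun h => hd (mem_powerset.1 hv h)
        rw [card_insert_of_notMem hdv, prod_insert hdv,
          Real.finsetProd_rpow _ _ fun j _ => hγ j,
          Real.mul_rpow (hΓnn _) (mul_nonneg (hγ d) (prod_nonneg fun j _ => hγ j)),
          Real.mul_rpow (hγ d) (prod_nonneg fun j _ => hγ j)]
        ring
    _ ≤ γ d ^ (1 / p) * ∑ v ∈ s.powerset,
          Cq ^ (1 / p) * (((#v + 1)! : ℝ) ^ (q / p) * ∏ j ∈ v, γ j ^ (1 / p)) := by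
        refine mul_le_mul_of_nonneg_left (sum_le_sum fun v _ => ?_) (Real.rpow_nonneg (hγ d) _)
        rw [← mul_assoc]
        exact mul_le_mul_of_nonneg_right (hΓp _)
          (prod_nonneg fun j _ => Real.rpow_nonneg (hγ j) _)
    _ ≤ γ d ^ (1 / p) * (Cq ^ (1 / p) * T) := by
        rw [← mul_sum]
        refine mul_le_mul_of_nonneg_left (mul_le_mul_of_nonneg_left ?_ (by positivity))
          (Real.rpow_nonneg (hγ d) _)
        exact sum_powerset_mul_prod_le_tsum (fun j => Real.rpow_nonneg (hγ j) _) hγs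
          (fun n => by positivity) hT s
    _ = Cq ^ (1 / p) * T * γ d ^ (1 / p) := by ring

theorem rpow_le_sum_filter_mem_powerset_Icc_rpow {γ Γ : ℕ → ℝ} (hγ : ∀ j, 0 ≤ γ j)
    (hΓnn : ∀ k, 0 ≤ Γ k) (hΓ1 : Γ 1 = 1) {d : ℕ} (hd : 1 ≤ d) (τ : ℝ) :
    γ d ^ τ ≤ ∑ u ∈ (Icc 1 d).powerset.filter (fun u => d ∈ u), (Γ #u * ∏ j ∈ u, γ j) ^ τ := by
  calc γ d ^ τ = (Γ #{d} * ∏ j ∈ {d}, γ j) ^ τ := by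
        rw [card_singleton, hΓ1, one_mul, prod_singleton]
    _ ≤ _ := single_le_sum (f := fun u => (Γ #u * ∏ j ∈ u, γ j) ^ τ)
        (fun u _ => Real.rpow_nonneg (mul_nonneg (hΓnn _) (prod_nonneg fun j _ => hγ j)) _)
        (by simpa using hd)

theorem stmt_9_general (γ : ℕ → ℝ) (Γ : ℕ → ℝ) (pstar q Cq : ℝ)
    (hγ0 : ∀ j, 0 ≤ γ j) (hΓ1 : Γ 1 = 1) (hΓnn : ∀ k, 0 ≤ Γ k)
    (hdecay : IsLUB {p : ℝ |
        Filter.Tendsto (fun j : ℕ => γ j * (j : ℝ) ^ p) Filter.atTop (nhds 0)} pstar)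
    (hq : q < pstar) (hCq : 0 < Cq)
    (hΓ : ∀ k : ℕ, Γ k ≤ Cq * (k.factorial : ℝ) ^ q) :
    ∀ τ : ℝ, 1 ≤ τ → τ < pstar → ∀ Ct : ℝ, 0 < Ct →
      ∃ c₁ c₂ : ℝ, 0 < c₁ ∧ 0 < c₂ ∧ ∀ d : ℕ, 1 ≤ d →
        c₁ * γ d ^ (1 / τ) ≤
          (∑ u ∈ (Finset.Icc 1 d).powerset.filter (fun u => d ∈ u),
            (Γ u.card * ∏ j ∈ u, γ j) ^ (1 / τ) * Ct ^ u.card) ∧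
        (∑ u ∈ (Finset.Icc 1 d).powerset.filter (fun u => d ∈ u),
            (Γ u.card * ∏ j ∈ u, γ j) ^ (1 / τ) * Ct ^ u.card) ≤
          c₂ * γ d ^ (1 / τ) := by
  intro τ hτ1 hτpstar Ct hCt
  obtain ⟨p, hp, hp_lt⟩ := exists_between (max_lt hτpstar hq)
  obtain ⟨s, hs, hps, -⟩ := hdecay.exists_between hp_lt
  have hτ0 : 0 < τ := by linarith
  have hτp : τ < p := (le_max_left τ q).trans_lt hp
  have hp0 : 0 < p := hτ0.trans hτp
  set γ' : ℕ → ℝ := fun j => γ j * Ct ^ τ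
  have hγ' : ∀ j, 0 ≤ γ' j := fun j => mul_nonneg (hγ0 j) (Real.rpow_nonneg hCt.le τ)
  have hγ's : Summable fun j => γ' j ^ (1 / p) :=
    summable_rpow_of_tendsto_mul_rpow hγ' (one_div_nonneg.2 hp0.le)
      (by rw [mul_one_div, one_lt_div hp0]; exact hps)
      (by simpa [γ', mul_right_comm] using hs.mul_const (Ct ^ τ))
  obtain ⟨K, hK0, hK⟩ := exists_sum_powerset_rpow_pod_insert_le hγ' hΓnn hCq hΓ hp0
    ((le_max_right τ q).trans_lt hp) hγ's
  have hγ'd : ∀ d, γ' d ^ (1 / τ) = Ct * γ d ^ (1 / τ) := fun d => by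
    rw [Real.mul_rpow (hγ0 d) (by positivity), ← Real.rpow_mul hCt.le,
      mul_one_div_cancel hτ0.ne', Real.rpow_one, mul_comm]
  refine ⟨Ct, K ^ (p / τ) * Ct, hCt, mul_pos (Real.rpow_pos_of_pos hK0 _) hCt, fun d hd => ?_⟩
  have hdmem : d ∈ Icc 1 d := mem_Icc.2 ⟨hd, le_rfl⟩
  rw [sum_congr rfl fun u _ => rpow_mul_pow_card_eq_rpow_prod_mul (Γ #u) γ u hτ0.ne' hCt.le
    (hΓnn _) fun j _ => hγ0 j]
  constructor
  · rw [← hγ'd]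
    exact rpow_le_sum_filter_mem_powerset_Icc_rpow hγ' hΓnn hΓ1 hd _
  · rw [mul_assoc, ← hγ'd]
    refine sum_rpow_one_div_le_of_sum_rpow_one_div_le
      (fun u _ => mul_nonneg (hΓnn _) (prod_nonneg fun j _ => hγ' j)) (hγ' d) hK0.le hτ0 hτp.le
      ?_
    rw [sum_filter_mem_powerset hdmem]
    exact hK d _ (notMem_erase d _)

/-- For POD weights `γ_u = Γ_{|u|} ∏_{j∈u} γ_j` with `decay_{γ,1} = p*` and
`Γ_k ≤ C_q (k!)^q` for some `q < p*`: for every `τ ∈ [1, p*)` and every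
constant `C̃_τ > 0`, the quantity `∑_{u : d ∈ u ⊆ [d]} γ_u^{1/τ} C̃_τ^{|u|}` is
bounded above and below by positive constant multiples of `γ_d^{1/τ}`,
uniformly in `d`. -/
theorem stmt_9 (γ : ℕ → ℝ) (Γ : ℕ → ℝ) (pstar q Cq : ℝ)
    (hγ0 : ∀ j, 0 ≤ γ j) (hγmono : Antitone γ)
    (hΓ0 : Γ 0 = 1) (hΓ1 : Γ 1 = 1) (hΓnn : ∀ k, 0 ≤ Γ k)
    (hdecay : IsLUB {p : ℝ |
        Filter.Tendsto (fun j : ℕ => γ j * (j : ℝ) ^ p) Filter.atTop (nhds 0)} pstar)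
    (hq : q < pstar) (hCq : 0 < Cq)
    (hΓ : ∀ k : ℕ, Γ k ≤ Cq * (k.factorial : ℝ) ^ q) :
    ∀ τ : ℝ, 1 ≤ τ → τ < pstar → ∀ Ct : ℝ, 0 < Ct →
      ∃ c₁ c₂ : ℝ, 0 < c₁ ∧ 0 < c₂ ∧ ∀ d : ℕ, 1 ≤ d →
        c₁ * γ d ^ (1 / τ) ≤
          (∑ u ∈ (Finset.Icc 1 d).powerset.filter (fun u => d ∈ u),
            (Γ u.card * ∏ j ∈ u, γ j) ^ (1 / τ) * Ct ^ u.card) ∧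
        (∑ u ∈ (Finset.Icc 1 d).powerset.filter (fun u => d ∈ u),
            (Γ u.card * ∏ j ∈ u, γ j) ^ (1 / τ) * Ct ^ u.card) ≤
          c₂ * γ d ^ (1 / τ) :=
  stmt_9_general γ Γ pstar q Cq hγ0 hΓ1 hΓnn hdecay hq hCq hΓ
end

section
/- Let r ≥ 1 be an integer and b ≥ 2. For k ∈ ℕ with b-adic expansion k = κ_1 b^{a_1−1} + ... + κ_ν b^{a_ν−1} (a_1 > ... > a_ν > 0, κ_i ∈ {1,...,b−1}) with ν > r digits, the k-th Walsh coefficient of x^r/r! vanishes: ∫_0^1 (x^r/r!) \overline{wal_k(x)} dx = 0. -/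
open scoped Real

/-- The `k`-th `b`-adic Walsh function: for `x = ∑ ξ_i b^{-i}` and
`k = ∑ κ_i b^i`, `wal_k(x) = ω_b^{κ_0 ξ_1 + κ_1 ξ_2 + ⋯}` with `ω_b = e^{2πi/b}`. -/
noncomputable def walsh (b k : ℕ) (x : ℝ) : ℂ :=
  Complex.exp (2 * Real.pi * Complex.I *
    (∑ i ∈ Finset.range (k + 1),
      ((k / b ^ i % b : ℕ) : ℂ) * ((⌊x * (b : ℝ) ^ (i + 1)⌋ % (b : ℤ) : ℤ) : ℂ)) / b)

/-!
On each interval `[m / N, (m + 1) / N)` with `N = b ^ (k + 1)` the conjugate Walsh function is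
constant, equal to `φ m = ∏ j, ω ^ (κ_{k-j} m_j)` where `m_j` are the `b`-adic digits of `m` and `ω`
is a primitive `b`-th root of unity. Integrating `x ^ r / r!` over such an interval gives a
polynomial of degree `r` in `m`, so it suffices that `∑_{m < N} φ m * m ^ s = 0` for `s ≤ r`.
Splitting off the top digit of `m` and expanding `m ^ s` binomially, a digit position where `k` has
a nonzero digit contributes the factor `∑_{c < b} ω ^ (κ c) = 0` unless it absorbs a positive
power of `m`; with more nonzero digits than `s`, every term vanishes.
-/

open Finset

theorem Finset.sum_range_mul_eq_sum_sum {M : Type*} [AddCommMonoid M] (f : ℕ → M) (q p : ℕ) :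
    ∑ m ∈ range (q * p), f m = ∑ c ∈ range q, ∑ t ∈ range p, f (c * p + t) := by
  induction q with
  | zero => simp
  | succ q ih => rw [sum_range_succ, ← ih, Nat.succ_mul, sum_range_add]

theorem Nat.mul_pow_add_div_pow_mod_of_lt {b a j c t : ℕ} (hj : j < a) (ht : t < b ^ a) :
    (c * b ^ a + t) / b ^ j % b = t / b ^ j % b := by
  obtain ⟨d, rfl⟩ : ∃ d, a = j + 1 + d := ⟨a - j - 1, by omega⟩
  have hb : 0 < b := Nat.pos_of_ne_zero fun h => by simp [h] at ht
  rw [show c * b ^ (j + 1 + d) + t = t + b ^ j * (c * b ^ d * b) by ring,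
    Nat.add_mul_div_left _ _ (pow_pos hb j), Nat.add_mul_mod_self_right]

theorem Nat.mul_pow_add_div_pow_mod_self {b a c t : ℕ} (hc : c < b) (ht : t < b ^ a) :
    (c * b ^ a + t) / b ^ a % b = c := by
  rw [Nat.add_comm, Nat.add_mul_div_right _ _ (pos_of_gt ht), Nat.div_eq_of_lt ht, zero_add,
    Nat.mod_eq_of_lt hc]

theorem sum_prod_digit_mul_pow_eq_zero {R : Type*} [CommSemiring R] [DecidableEq R] {b : ℕ}
    (g : ℕ → ℕ → R) (a : ℕ) {s : ℕ} (hs : s < #{j ∈ range a | ∑ c ∈ range b, g j c = 0}) :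
    ∑ m ∈ range (b ^ a), (∏ j ∈ range a, g j (m / b ^ j % b)) * (m : R) ^ s = 0 := by
  induction a generalizing s with
  | zero => simp at hs
  | succ a ih =>
    have expand : ∀ c ∈ range b, ∀ t ∈ range (b ^ a),
        (∏ j ∈ range (a + 1), g j ((c * b ^ a + t) / b ^ j % b)) * ((c * b ^ a + t : ℕ) : R) ^ s
          = ∑ u ∈ range (s + 1), (g a c * (c : R) ^ u * (b : R) ^ (a * u) * s.choose u) *
              ((∏ j ∈ range a, g j (t / b ^ j % b)) * (t : R) ^ (s - u)) := by
      intro c hc t ht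
      rw [mem_range] at hc ht
      rw [prod_range_succ, Nat.mul_pow_add_div_pow_mod_self hc ht,
        prod_congr rfl fun j hj => by rw [Nat.mul_pow_add_div_pow_mod_of_lt (mem_range.1 hj) ht],
        Nat.cast_add, Nat.cast_mul, Nat.cast_pow, add_pow, mul_sum]
      refine sum_congr rfl fun u _ => ?_
      ring
    rw [pow_succ', sum_range_mul_eq_sum_sum,
      sum_congr rfl fun c hc => sum_congr rfl (expand c hc),
      sum_congr rfl fun c _ => sum_comm, sum_comm]
    refine sum_eq_zero fun u hu => ?_
    rw [mem_range] at hu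
    rw [← sum_mul_sum]
    rw [← Nat.count_eq_card_filter_range, Nat.count_succ, Nat.count_eq_card_filter_range] at hs
    -- only the term `u = 0` escapes the induction hypothesis, and it carries `∑ c, g a c`
    rcases lt_or_ge (s - u) #{j ∈ range a | ∑ c ∈ range b, g j c = 0} with h | h
    · rw [ih h, mul_zero]
    · have ha : ∑ c ∈ range b, g a c = 0 := by by_contra ha; rw [if_neg ha] at hs; omega
      obtain rfl : u = 0 := by rw [if_pos ha] at hs; omega
      simp [ha]

theorem IsPrimitiveRoot.sum_range_pow_mul_eq_zero {R : Type*} [CommRing R] [IsDomain R] {ζ : R}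
    {b κ : ℕ} (hζ : IsPrimitiveRoot ζ b) (hκ : ¬ b ∣ κ) : ∑ c ∈ range b, ζ ^ (κ * c) = 0 := by
  have hne : ζ ^ κ ≠ 1 := by rwa [Ne, hζ.pow_eq_one_iff_dvd]
  have hb : (ζ ^ κ) ^ b = 1 := by rw [← pow_mul, mul_comm, pow_mul, hζ.pow_eq_one, one_pow]
  have h := mul_geom_sum (ζ ^ κ) b
  rw [hb, sub_self] at h
  simp_rw [pow_mul]
  exact (mul_eq_zero.1 h).resolve_left (sub_ne_zero.2 hne)

theorem card_filter_digit_ne_zero_le {R : Type*} [CommRing R] [IsDomain R] [DecidableEq R]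
    {b k : ℕ} (hb : 0 < b) {ω : R} (hω : IsPrimitiveRoot ω b) :
    #{i ∈ range (k + 1) | k / b ^ i % b ≠ 0} ≤
      #{j ∈ range (k + 1) | ∑ c ∈ range b, ω ^ (k / b ^ (k - j) % b * c) = 0} := by
  refine card_le_card_of_injOn (k - ·) (fun i hi => ?_) fun i hi j hj h => ?_
  · simp only [coe_filter, mem_range, Set.mem_ofPred_eq] at hi ⊢
    rw [Nat.sub_sub_self (by omega)]
    exact ⟨by omega,
      hω.sum_range_pow_mul_eq_zero (Nat.not_dvd_of_pos_of_lt (by omega) (Nat.mod_lt _ hb))⟩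
  · simp only [coe_filter, mem_range, Set.mem_ofPred_eq] at hi hj h
    omega

theorem sum_mul_add_one_pow_sub_pow_eq_zero {R : Type*} [CommRing R] (φ : ℕ → R) (M n : ℕ)
    (h : ∀ s < n, ∑ m ∈ range M, φ m * (m : R) ^ s = 0) :
    ∑ m ∈ range M, φ m * (((m : R) + 1) ^ n - (m : R) ^ n) = 0 := by
  have expand : ∀ y : R, (y + 1) ^ n - y ^ n = ∑ s ∈ range n, y ^ s * n.choose s := by
    intro y
    rw [add_pow, sum_range_succ]
    simp
  simp_rw [expand, mul_sum, ← mul_assoc]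
  rw [sum_comm]
  exact sum_eq_zero fun s hs => by rw [← sum_mul, h s (mem_range.1 hs), zero_mul]

theorem Nat.floor_mul_natCast_eq_of_mem_Ioo {N m : ℕ} (hN : 0 < N) {x : ℝ}
    (hx : x ∈ Set.Ioo ((m : ℝ) / N) ((m + 1) / N)) : ⌊x * N⌋₊ = m := by
  have hN' : (0 : ℝ) < N := Nat.cast_pos.2 hN
  have hx0 : 0 ≤ x := le_trans (by positivity) hx.1.le
  rw [Nat.floor_eq_iff (by positivity), ← div_le_iff₀ hN', ← lt_div_iff₀ hN']
  exact ⟨hx.1.le, hx.2⟩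

theorem integral_mul_comp_natFloor_eq_sum {f : ℝ → ℂ} (hf : Continuous f) (φ : ℕ → ℂ) {N : ℕ}
    (hN : 0 < N) :
    ∫ x in (0 : ℝ)..1, f x * φ ⌊x * N⌋₊ =
      ∑ m ∈ range N, (∫ x in (m / N : ℝ)..((m + 1) / N), f x) * φ m := by
  have piece : ∀ m : ℕ, Set.EqOn (fun x => f x * φ m) (fun x => f x * φ ⌊x * N⌋₊)
      (Set.uIoo ((m : ℝ) / N) (((m + 1 : ℕ) : ℝ) / N)) := by
    intro m x hx
    rw [Set.uIoo_of_le (by gcongr; simp)] at hx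
    simp only [Nat.floor_mul_natCast_eq_of_mem_Ioo hN (by simpa using hx)]
  have hsum := intervalIntegral.sum_integral_adjacent_intervals (μ := MeasureTheory.volume)
    (a := fun m : ℕ => (m : ℝ) / N) (n := N)
    fun m _ => ((hf.mul continuous_const).intervalIntegrable _ _).congr_uIoo (piece m)
  rw [Nat.cast_zero, zero_div, div_self (by positivity)] at hsum
  rw [← hsum]
  refine sum_congr rfl fun m _ => ?_
  rw [← intervalIntegral.integral_mul_const, ← Nat.cast_succ,
    intervalIntegral.integral_congr_uIoo (piece m)]

theorem integral_pow_div_factorial_natCast_div (r N m : ℕ) :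
    ∫ x in (m / N : ℝ)..((m + 1) / N), ((x ^ r / r.factorial : ℝ) : ℂ) =
      (((m : ℂ) + 1) ^ (r + 1) - (m : ℂ) ^ (r + 1)) / ((N : ℂ) ^ (r + 1) * (r + 1).factorial) := by
  rw [intervalIntegral.integral_ofReal, intervalIntegral.integral_div, integral_pow,
    Nat.factorial_succ, div_pow, div_pow, ← sub_div]
  push_cast
  field_simp

theorem Int.floor_mul_pow_succ_eq_natFloor_div {b k i : ℕ} (hb : 0 < b) (hi : i ≤ k) {x : ℝ}
    (hx : 0 ≤ x) :
    ⌊x * (b : ℝ) ^ (i + 1)⌋ = ((⌊x * (b : ℝ) ^ (k + 1)⌋₊ / b ^ (k - i) : ℕ) : ℤ) := by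
  have hscale : x * (b : ℝ) ^ (i + 1) = x * (b : ℝ) ^ (k + 1) / ((b ^ (k - i) : ℕ) : ℝ) := by
    rw [eq_div_iff (by positivity), Nat.cast_pow, mul_assoc, ← pow_add,
      show i + 1 + (k - i) = k + 1 by omega]
  rw [hscale, Int.floor_div_natCast, ← Int.natCast_floor_eq_floor (by positivity)]
  push_cast
  rfl

theorem walsh_eq_prod {b k : ℕ} (hb : 0 < b) {x : ℝ} (hx : 0 ≤ x) :
    walsh b k x = ∏ j ∈ range (k + 1), Complex.exp (2 * π * Complex.I / b) ^
      (k / b ^ (k - j) % b * (⌊x * (b : ℝ) ^ (k + 1)⌋₊ / b ^ j % b)) := by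
  set M := ⌊x * (b : ℝ) ^ (k + 1)⌋₊
  have hterm : ∀ i ∈ range (k + 1),
      ((k / b ^ i % b : ℕ) : ℂ) * ((⌊x * (b : ℝ) ^ (i + 1)⌋ % (b : ℤ) : ℤ) : ℂ) =
        ((k / b ^ i % b * (M / b ^ (k - i) % b) : ℕ) : ℂ) := by
    intro i hi
    rw [Int.floor_mul_pow_succ_eq_natFloor_div hb (Nat.lt_succ_iff.1 (mem_range.1 hi)) hx]
    push_cast
    rfl
  rw [walsh, sum_congr rfl hterm, mul_div_right_comm, mul_sum, Complex.exp_sum,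
    ← prod_range_reflect]
  refine prod_congr rfl fun j hj => ?_
  have hj : j ≤ k := Nat.lt_succ_iff.1 (mem_range.1 hj)
  rw [mul_comm, Complex.exp_nat_mul, show k + 1 - 1 - j = k - j by omega, Nat.sub_sub_self hj]

theorem stmt_11_general (b r k : ℕ) (hb : 2 ≤ b)
    (hν : r < ((Finset.range (k + 1)).filter (fun i => k / b ^ i % b ≠ 0)).card) :
    (∫ x in (0:ℝ)..1, ((x ^ r / (r.factorial : ℝ) : ℝ) : ℂ) *
        (starRingEnd ℂ) (walsh b k x)) = 0 := by
  have hb0 : 0 < b := by omega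
  set N := b ^ (k + 1)
  set ω := starRingEnd ℂ (Complex.exp (2 * π * Complex.I / b))
  have hω : IsPrimitiveRoot ω b :=
    (Complex.isPrimitiveRoot_exp b hb0.ne').map_of_injective (starRingEnd ℂ).injective
  set g : ℕ → ℕ → ℂ := fun j c => ω ^ (k / b ^ (k - j) % b * c)
  set φ : ℕ → ℂ := fun m => ∏ j ∈ range (k + 1), g j (m / b ^ j % b)
  have hmoments : ∀ s < r + 1, ∑ m ∈ range N, φ m * (m : ℂ) ^ s = 0 := fun s hs =>
    sum_prod_digit_mul_pow_eq_zero g (k + 1)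
      ((Nat.lt_succ_iff.1 hs).trans_lt (hν.trans_le (card_filter_digit_ne_zero_le hb0 hω)))
  calc _ = ∫ x in (0 : ℝ)..1, ((x ^ r / r.factorial : ℝ) : ℂ) * φ ⌊x * N⌋₊ := by
        refine intervalIntegral.integral_congr fun x hx => ?_
        rw [Set.uIcc_of_le zero_le_one] at hx
        simp only [walsh_eq_prod hb0 hx.1, map_prod, map_pow, N, Nat.cast_pow, φ, g, ω]
    _ = ∑ m ∈ range N, (∫ x in (m / N : ℝ)..((m + 1) / N), ((x ^ r / r.factorial : ℝ) : ℂ)) * φ m :=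
        integral_mul_comp_natFloor_eq_sum (by fun_prop) φ (by positivity)
    _ = (∑ m ∈ range N, φ m * (((m : ℂ) + 1) ^ (r + 1) - (m : ℂ) ^ (r + 1))) /
          ((N : ℂ) ^ (r + 1) * (r + 1).factorial) := by
        rw [sum_div]
        refine sum_congr rfl fun m _ => ?_
        rw [integral_pow_div_factorial_natCast_div, mul_div_assoc, mul_comm]
    _ = 0 := by rw [sum_mul_add_one_pow_sub_pow_eq_zero φ N (r + 1) hmoments, zero_div]

/-- If `k` has more than `r` nonzero `b`-adic digits, then the `k`-th Walsh
coefficient of `x^r / r!` vanishes. -/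
theorem stmt_11 (b r k : ℕ) (hb : 2 ≤ b) (hr : 1 ≤ r)
    (hν : r < ((Finset.range (k + 1)).filter (fun i => k / b ^ i % b ≠ 0)).card) :
    (∫ x in (0:ℝ)..1, ((x ^ r / (r.factorial : ℝ) : ℝ) : ℂ) *
        (starRingEnd ℂ) (walsh b k x)) = 0 :=
  stmt_11_general b r k hb hν
end
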